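/- arXiv:1011.2591 — 3 statements merged into one kernel-verified Lean document; each statement's English description precedes it below -/
import Mathlib

section
/- For n ≥ 1 and q ≥ 2, the edge clique cover number of the Hamming graph H(n,q) equals n·q^{n-1}. -/
/-!
The lines of `H(n,q)` (all coordinates but one fixed) are cliques covering every edge, and there
are `n * q ^ (n - 1)` of them. Conversely, a clique containing an edge lies in the line of that
edge, so if we pick one edge on each line, no clique contains two picked edges and every edge
clique cover needs a separate clique for each of them.
-/

/-- The Hamming graph H(n,q): vertices are n-tuples over [q],
adjacent iff Hamming distance is 1. -/
def hamming (n q : ℕ) : SimpleGraph (Fin n → Fin q) where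
  Adj x y := hammingDist x y = 1
  symm := ⟨fun x y h => (hammingDist_comm y x).trans h⟩
  loopless := ⟨fun x h => by simp [hammingDist_self] at h⟩

/-- The edge clique cover number: minimum size of a family of cliques covering all edges. -/
noncomputable def eccNum {V : Type*} (G : SimpleGraph V) : ℕ :=
  sInf {m | ∃ F : Finset (Set V), F.card = m ∧ (∀ S ∈ F, G.IsClique S) ∧
    ∀ x y, G.Adj x y → ∃ S ∈ F, x ∈ S ∧ y ∈ S}

namespace SimpleGraph

variable {V : Type*} {G : SimpleGraph V}

variable (G) in
def IsEdgeCliqueCover (F : Finset (Set V)) : Prop :=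
  (∀ S ∈ F, G.IsClique S) ∧ ∀ x y, G.Adj x y → ∃ S ∈ F, x ∈ S ∧ y ∈ S

theorem eccNum_le_card {F : Finset (Set V)} (hF : G.IsEdgeCliqueCover F) :
    eccNum G ≤ F.card :=
  Nat.sInf_le ⟨F, rfl, hF⟩

theorem le_eccNum {m : ℕ} (hcover : ∃ F, G.IsEdgeCliqueCover F)
    (h : ∀ F, G.IsEdgeCliqueCover F → m ≤ F.card) : m ≤ eccNum G := by
  obtain ⟨F, hF⟩ := hcover
  exact le_csInf ⟨_, F, rfl, hF⟩ fun _ ⟨F', hcard, hF'⟩ => hcard ▸ h F' hF'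

theorem IsEdgeCliqueCover.card_le_card {F : Finset (Set V)} (hF : G.IsEdgeCliqueCover F)
    {ι : Type*} (s : Finset ι) (u v : ι → V) (hadj : ∀ i ∈ s, G.Adj (u i) (v i))
    (hsep : ∀ i ∈ s, ∀ j ∈ s, ∀ S, G.IsClique S →
      u i ∈ S → v i ∈ S → u j ∈ S → v j ∈ S → i = j) :
    s.card ≤ F.card :=
  Finset.card_le_card_of_forall_subsingleton (fun i S => u i ∈ S ∧ v i ∈ S)
    (fun i hi => hF.2 _ _ (hadj i hi))
    (fun S hS _ ⟨hi, hui, hvi⟩ _ ⟨hj, huj, hvj⟩ =>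
      hsep _ hi _ hj S (hF.1 S hS) hui hvi huj hvj)

theorem eccNum_eq_card_of_separated {ι : Type*} (s : Finset ι) (C : ι → Set V) (u v : ι → V)
    (hC : ∀ i ∈ s, G.IsClique (C i)) (hcover : ∀ x y, G.Adj x y → ∃ i ∈ s, x ∈ C i ∧ y ∈ C i)
    (hu : ∀ i ∈ s, u i ∈ C i) (hv : ∀ i ∈ s, v i ∈ C i) (hadj : ∀ i ∈ s, G.Adj (u i) (v i))
    (hsep : ∀ i ∈ s, ∀ j ∈ s, ∀ S, G.IsClique S →
      u i ∈ S → v i ∈ S → u j ∈ S → v j ∈ S → i = j) :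
    eccNum G = s.card := by
  classical
  have hF : G.IsEdgeCliqueCover (s.image C) := by
    refine ⟨by simpa using hC, fun x y hxy => ?_⟩
    obtain ⟨i, hi, hx, hy⟩ := hcover x y hxy
    exact ⟨C i, Finset.mem_image_of_mem C hi, hx, hy⟩
  have hinj : Set.InjOn C s := fun i hi j hj hij =>
    hsep i hi j hj (C j) (hC j hj) (hij ▸ hu i hi) (hij ▸ hv i hi) (hu j hj) (hv j hj)
  rw [← Finset.card_image_of_injOn hinj]
  refine le_antisymm (eccNum_le_card hF) (le_eccNum ⟨_, hF⟩ fun F hF' => ?_)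
  rw [Finset.card_image_of_injOn hinj]
  exact hF'.card_le_card s u v hadj hsep

end SimpleGraph

open Function

variable {n q : ℕ}

theorem hamming_adj_iff {x y : Fin n → Fin q} :
    (hamming n q).Adj x y ↔ ∃ i, x i ≠ y i ∧ ∀ j ≠ i, x j = y j := by
  simp only [hamming, hammingDist, Finset.card_eq_one, Finset.eq_singleton_iff_unique_mem,
    Finset.mem_filter, Finset.mem_univ, true_and]
  exact exists_congr fun i => and_congr_right' <| forall_congr' fun j => not_imp_comm

theorem hamming_adj_update {x : Fin n → Fin q} {i : Fin n} {c : Fin q} (hc : x i ≠ c) :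
    (hamming n q).Adj x (update x i c) :=
  hamming_adj_iff.2 ⟨i, by rwa [update_self], fun j hj => (update_of_ne hj c x).symm⟩

def hammingLine (i : Fin n) (a : Fin n → Fin q) : Set (Fin n → Fin q) :=
  {x | ∀ j ≠ i, x j = a j}

theorem update_mem_hammingLine (i : Fin n) (a : Fin n → Fin q) (c : Fin q) :
    update a i c ∈ hammingLine i a :=
  fun _ hj => update_of_ne hj c a

theorem hammingLine_isClique (i : Fin n) (a : Fin n → Fin q) :
    (hamming n q).IsClique (hammingLine i a) := by
  intro x hx y hy hxy
  have hagree : ∀ j ≠ i, x j = y j := fun j hj => (hx j hj).trans (hy j hj).symm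
  refine hamming_adj_iff.2 ⟨i, fun hi => hxy (funext fun j => ?_), hagree⟩
  by_cases hj : j = i
  · exact hj ▸ hi
  · exact hagree j hj

/-- A vertex `z` off the line of the edge `x y` differs from `x` and from `y` in coordinates other
than the one where `x` and `y` differ, so it cannot be adjacent to both. -/
theorem SimpleGraph.IsClique.subset_hammingLine {S : Set (Fin n → Fin q)}
    (hS : (hamming n q).IsClique S) {x y : Fin n → Fin q} (hx : x ∈ S) (hy : y ∈ S) {i : Fin n}
    (hxy : x i ≠ y i) (hline : y ∈ hammingLine i x) : S ⊆ hammingLine i x := by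
  intro z hz j hji
  by_cases hzx : z = x
  · rw [hzx]
  by_cases hzy : z = y
  · exact hzy ▸ hline j hji
  by_contra hzj
  obtain ⟨k, -, hk⟩ := hamming_adj_iff.1 (hS hz hx hzx)
  obtain ⟨k', -, hk'⟩ := hamming_adj_iff.1 (hS hz hy hzy)
  have hjk : j = k := by_contra fun h => hzj (hk j h)
  have hzi : z i = x i := hk i fun h => hji (hjk.trans h.symm)
  have hik' : i = k' := by_contra fun h => hxy (hzi ▸ hk' i h)
  have hjk' : j = k' := by_contra fun h => hzj ((hk' j h).trans (hline j hji))
  exact hji (hjk'.trans hik'.symm)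

/-- Each line in direction `i` meets `{a | a i = z}` in exactly one point, so these pairs index
the lines of `H(n,q)`. -/
def anchoredLines (n : ℕ) (z : Fin q) : Finset (Fin n × (Fin n → Fin q)) :=
  {p | p.2 p.1 = z}

@[simp]
theorem mem_anchoredLines {z : Fin q} {p : Fin n × (Fin n → Fin q)} :
    p ∈ anchoredLines n z ↔ p.2 p.1 = z := by
  simp [anchoredLines]

theorem card_anchoredLines (n : ℕ) (z : Fin q) :
    (anchoredLines n z).card = n * q ^ (n - 1) := by
  have hfiber (i : Fin n) : (Finset.univ.filter fun a : Fin n → Fin q => a i = z).card =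
      q ^ (n - 1) := by
    simpa using Fintype.card_filter_piFinset_const_eq_of_mem Finset.univ i (Finset.mem_univ z)
  rw [anchoredLines, Finset.card_filter, Fintype.sum_prod_type]
  simp only [← Finset.card_filter, hfiber, Finset.sum_const, Finset.card_univ, Fintype.card_fin,
    smul_eq_mul]

theorem eq_of_anchored_edges_mem_isClique {z₀ z₁ : Fin q} (h : z₀ ≠ z₁) {i i' : Fin n}
    {a a' : Fin n → Fin q} (hp : a i = z₀) (hp' : a' i' = z₀) {S : Set (Fin n → Fin q)}
    (hS : (hamming n q).IsClique S) (hu : a ∈ S) (hv : update a i z₁ ∈ S) (hu' : a' ∈ S)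
    (hv' : update a' i' z₁ ∈ S) : (i, a) = (i', a') := by
  have hsub := hS.subset_hammingLine hu hv (by rwa [hp, update_self])
    (update_mem_hammingLine _ _ _)
  obtain rfl : i = i' := by
    by_contra hi
    have h₀ := hsub hu' i' (Ne.symm hi)
    have h₁ := hsub hv' i' (Ne.symm hi)
    rw [update_self, ← h₀, hp'] at h₁
    exact h h₁.symm
  have : a' = a := funext fun j => by
    by_cases hj : j = i
    · rw [hj, hp, hp']
    · exact hsub hu' j hj
  rw [this]

theorem hamming_eccNum_general (n q : ℕ) (hq : 2 ≤ q) :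
    eccNum (hamming n q) = n * q ^ (n - 1) := by
  set z₀ : Fin q := ⟨0, by omega⟩
  set z₁ : Fin q := ⟨1, by omega⟩
  have h01 : z₀ ≠ z₁ := by simp [z₀, z₁]
  rw [← card_anchoredLines n z₀]
  refine SimpleGraph.eccNum_eq_card_of_separated _ (fun p => hammingLine p.1 p.2) Prod.snd
    (fun p => update p.2 p.1 z₁) (fun p _ => hammingLine_isClique p.1 p.2) ?_
    (fun _ _ _ _ => rfl) (fun _ _ => update_mem_hammingLine _ _ _)
    (fun p hp => hamming_adj_update (mem_anchoredLines.1 hp ▸ h01))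
    (fun p hp p' hp' S hS => eq_of_anchored_edges_mem_isClique h01
      (mem_anchoredLines.1 hp) (mem_anchoredLines.1 hp') hS)
  intro x y hxy
  obtain ⟨i, -, hi⟩ := hamming_adj_iff.1 hxy
  refine ⟨(i, update x i z₀), by simp, fun j hj => (update_of_ne hj _ _).symm,
    fun j hj => (hi j hj).symm.trans (update_of_ne hj _ _).symm⟩

/-- The edge clique cover number of H(n,q) equals n·q^{n-1}. -/
theorem hamming_eccNum (n q : ℕ) (hn : 1 ≤ n) (hq : 2 ≤ q) :
    eccNum (hamming n q) = n * q ^ (n - 1) :=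
  hamming_eccNum_general n q hq
end

section
/- For any graph G, the competition number k(G) is at least min over vertices v of the vertex clique cover number of the induced subgraph on the open neighborhood of v. -/
/-!
Take an acyclic digraph `D` realizing `G` with `k` extra isolated vertices. Since `D` is acyclic,
some vertex `v` of `G` has no out-arc into `V`, so all its out-arcs go to the `k` extra vertices.
Every neighbour `w` of `v` shares an out-neighbour with `v`, hence is covered by one of the `k`
in-neighbourhoods of the extra vertices, and each in-neighbourhood is a clique of `G`.
-/

/-- The competition number of a graph `G`: the least `k` such that `G` together with
`k` isolated vertices is the competition graph of some acyclic digraph. -/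
noncomputable def CompetitionNumber {V : Type*} (G : SimpleGraph V) : ℕ :=
  sInf {k | ∃ D : (V ⊕ Fin k) → (V ⊕ Fin k) → Prop,
    (∀ w, ¬ Relation.TransGen D w w) ∧
    (∀ a b, (a ≠ b ∧ ∃ w, D a w ∧ D b w) ↔
      ∃ u v, a = Sum.inl u ∧ b = Sum.inl v ∧ G.Adj u v)}

/-- The vertex clique cover number. -/
noncomputable def vccNum {V : Type*} (G : SimpleGraph V) : ℕ :=
  sInf {m | ∃ F : Finset (Set V), F.card = m ∧ (∀ S ∈ F, G.IsClique S) ∧ ∀ v, ∃ S ∈ F, v ∈ S}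

open Relation

theorem Relation.exists_forall_not_rel_of_not_transGen_self {α : Type*} [Finite α]
    {r : α → α → Prop} (hr : ∀ a, ¬ TransGen r a a) {s : Set α} (hs : s.Nonempty) :
    ∃ a ∈ s, ∀ b ∈ s, ¬ r a b := by
  have : IsTrans α (flip (TransGen r)) := ⟨fun _ _ _ hab hbc => hbc.trans hab⟩
  have : Std.Irrefl (flip (TransGen r)) := ⟨hr⟩
  obtain ⟨a, ha, hmin⟩ :=
    (Finite.wellFounded_of_trans_of_irrefl (flip (TransGen r))).has_min s hs
  exact ⟨a, ha, fun b hb hab => hmin b hb (.single hab)⟩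

theorem Relation.not_transGen_self_of_isLeft_isRight {α β : Type*} {r : α ⊕ β → α ⊕ β → Prop}
    (hr : ∀ a b, r a b → a.isLeft ∧ b.isRight) (w : α ⊕ β) : ¬ TransGen r w w := by
  intro hw
  obtain ⟨b, hwb, -⟩ := TransGen.head'_iff.1 hw
  obtain ⟨c, -, hcw⟩ := TransGen.tail'_iff.1 hw
  have hleft := (hr _ _ hwb).1
  have hright := (hr _ _ hcw).2
  cases w <;> simp at hleft hright

namespace SimpleGraph

variable {V : Type*}

theorem vccNum_le_card_of_cover {ι : Type*} [Fintype ι] (G : SimpleGraph V) (S : ι → Set V)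
    (hS : ∀ i, G.IsClique (S i)) (hcover : ∀ v, ∃ i, v ∈ S i) :
    vccNum G ≤ Fintype.card ι := by
  classical
  refine (Nat.sInf_le ?_).trans (Finset.card_image_le (s := Finset.univ) (f := S))
  exact ⟨_, rfl, by simpa using hS, by simpa using hcover⟩

/-- The extra isolated vertices are the `Sum.inr i`. -/
def IsCompetitionRealization (G : SimpleGraph V) (k : ℕ) (D : V ⊕ Fin k → V ⊕ Fin k → Prop) :
    Prop :=
  (∀ w, ¬ TransGen D w w) ∧
    ∀ a b, (a ≠ b ∧ ∃ w, D a w ∧ D b w) ↔ ∃ u v, a = Sum.inl u ∧ b = Sum.inl v ∧ G.Adj u v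

/-- One extra vertex per edge, entered by both ends of the edge, realizes `G`. -/
theorem exists_isCompetitionRealization [Finite V] (G : SimpleGraph V) :
    ∃ k D, G.IsCompetitionRealization k D := by
  have := Fintype.ofFinite V
  let e : Sym2 V ≃ Fin (Fintype.card (Sym2 V)) := Fintype.equivFin _
  refine ⟨_, fun a b => ∃ u s, a = .inl u ∧ b = .inr (e s) ∧ u ∈ s ∧ s ∈ G.edgeSet,
    not_transGen_self_of_isLeft_isRight ?_, fun a b => ⟨?_, ?_⟩⟩
  · rintro a b ⟨u, s, rfl, rfl, -, -⟩
    simp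
  · rintro ⟨hab, w, ⟨u, s, rfl, rfl, hus, hs⟩, ⟨u', s', rfl, hw, hus', -⟩⟩
    obtain rfl : s = s' := e.injective (Sum.inr.inj hw)
    have hne : u ≠ u' := fun h => hab (congrArg _ h)
    rw [(Sym2.mem_and_mem_iff hne).1 ⟨hus, hus'⟩] at hs
    exact ⟨u, u', rfl, rfl, hs⟩
  · rintro ⟨u, v, rfl, rfl, huv⟩
    exact ⟨fun h => huv.ne (Sum.inl.inj h), .inr (e s(u, v)),
      ⟨u, _, rfl, rfl, Sym2.mem_mk_left u v, huv⟩, ⟨v, _, rfl, rfl, Sym2.mem_mk_right u v, huv⟩⟩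

variable {G : SimpleGraph V} {k : ℕ} {D : V ⊕ Fin k → V ⊕ Fin k → Prop}

theorem IsCompetitionRealization.adj_of_rel_of_rel (hD : G.IsCompetitionRealization k D)
    {u v : V} (huv : u ≠ v) {w : V ⊕ Fin k} (hu : D (.inl u) w) (hv : D (.inl v) w) :
    G.Adj u v := by
  obtain ⟨u', v', hu', hv', h⟩ := (hD.2 _ _).1 ⟨fun h => huv (Sum.inl.inj h), w, hu, hv⟩
  rwa [Sum.inl.inj hu', Sum.inl.inj hv']

theorem IsCompetitionRealization.vccNum_induce_neighborSet_le
    (hD : G.IsCompetitionRealization k D) {v : V} (hv : ∀ u, ¬ D (.inl v) (.inl u)) :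
    vccNum (G.induce (G.neighborSet v)) ≤ k := by
  have hcover (w : G.neighborSet v) : ∃ i, D (.inl w) (.inr i) := by
    obtain ⟨-, p, hvp, hwp⟩ := (hD.2 (.inl v) (.inl w)).2 ⟨v, w, rfl, rfl, w.2⟩
    cases p with
    | inl u => exact absurd hvp (hv u)
    | inr i => exact ⟨i, hwp⟩
  simpa using vccNum_le_card_of_cover _ (fun i => {w : G.neighborSet v | D (.inl w) (.inr i)})
    (fun i a ha b hb hab => hD.adj_of_rel_of_rel (Subtype.coe_ne_coe.2 hab) ha hb)
    hcover

theorem IsCompetitionRealization.exists_vccNum_induce_neighborSet_le [Finite V] [Nonempty V]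
    (hD : G.IsCompetitionRealization k D) :
    ∃ v, vccNum (G.induce (G.neighborSet v)) ≤ k := by
  obtain ⟨_, ⟨v, rfl⟩, hv⟩ :=
    exists_forall_not_rel_of_not_transGen_self hD.1 (Set.range_nonempty (Sum.inl : V → _))
  exact ⟨v, hD.vccNum_induce_neighborSet_le fun u => hv _ ⟨u, rfl⟩⟩

end SimpleGraph

/-- Opsut's lower bound: k(G) ≥ min over vertices v of θ_V(N(v)). -/
theorem opsut_lower_bound {V : Type*} [Fintype V] (G : SimpleGraph V) :
    sInf (Set.range fun v : V =>
      vccNum (SimpleGraph.induce (G.neighborSet v) G)) ≤ CompetitionNumber G := by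
  cases isEmpty_or_nonempty V
  · simp [Set.range_eq_empty]
  obtain ⟨D, hD⟩ := Nat.sInf_mem (s := {k | ∃ D, G.IsCompetitionRealization k D})
    G.exists_isCompetitionRealization
  obtain ⟨v, hv⟩ := hD.exists_vccNum_induce_neighborSet_le
  exact (Nat.sInf_le (Set.mem_range_self v)).trans hv
end

section
/- For q ≥ 2, there exists an acyclic digraph D on vertex set [q]^2 ∪ {z_1, z_2} whose competition graph is H(2,q) together with the two isolated vertices z_1, z_2; hence k(H(2,q)) ≤ 2. -/
/-! The rows and columns of `[q]²` are cliques covering all edges of `H(2,q)`. Give each of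
them its own prey: row `j` preys on `(j+1, 0)` and column `j` on `(q-1, j+1)`, the
lexicographic successors of their largest vertices, while the last row and the last column,
whose largest vertices coincide, prey on the extra vertices `z₁` and `z₂`. Every arc then goes
up in the lexicographic order, so the digraph is acyclic, and since the prey are distinct two
vertices compete exactly when they share a row or a column. -/

open Function Relation

section CliqueCover

variable {V W ι : Type*}

def preyDigraph (C : ι → Set V) (p : ι → V ⊕ W) (a b : V ⊕ W) : Prop :=
  ∃ v i, a = .inl v ∧ v ∈ C i ∧ b = p i

variable {C : ι → Set V} {p : ι → V ⊕ W}

theorem not_transGen_preyDigraph_self {α : Type*} [Preorder α] (f : V ⊕ W → α)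
    (hf : ∀ i, ∀ v ∈ C i, f (.inl v) < f (p i)) (w : V ⊕ W) :
    ¬ TransGen (preyDigraph C p) w w := by
  intro hw
  have hlt : preyDigraph C p ≤ ((· < ·) on f) := by
    rintro _ _ ⟨v, i, rfl, hv, rfl⟩
    exact hf i v hv
  have hfw : TransGen (· < ·) (f w) (f w) := hw.lift f hlt
  rw [transGen_eq_self] at hfw
  exact lt_irrefl _ hfw

theorem preyDigraph_compete_iff (hp : Injective p) (a b : V ⊕ W) :
    (a ≠ b ∧ ∃ w, preyDigraph C p a w ∧ preyDigraph C p b w) ↔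
      ∃ u v, a = .inl u ∧ b = .inl v ∧ u ≠ v ∧ ∃ i, u ∈ C i ∧ v ∈ C i := by
  constructor
  · rintro ⟨hab, w, ⟨u, i, rfl, hu, rfl⟩, ⟨v, j, rfl, hv, hij⟩⟩
    obtain rfl := hp hij
    exact ⟨u, v, rfl, rfl, fun huv => hab (huv ▸ rfl), i, hu, hv⟩
  · rintro ⟨u, v, rfl, rfl, huv, i, hu, hv⟩
    exact ⟨fun h => huv (Sum.inl_injective h), p i,
      ⟨u, i, rfl, hu, rfl⟩, ⟨v, i, rfl, hv, rfl⟩⟩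

theorem exists_acyclic_competition_of_cliqueCover {α : Type*} [Preorder α] (G : SimpleGraph V)
    (hG : ∀ u v, G.Adj u v ↔ u ≠ v ∧ ∃ i, u ∈ C i ∧ v ∈ C i) (hp : Injective p)
    (f : V ⊕ W → α) (hf : ∀ i, ∀ v ∈ C i, f (.inl v) < f (p i)) :
    ∃ D : V ⊕ W → V ⊕ W → Prop, (∀ w, ¬ TransGen D w w) ∧
      ∀ a b, (a ≠ b ∧ ∃ w, D a w ∧ D b w) ↔
        ∃ u v, a = .inl u ∧ b = .inl v ∧ G.Adj u v := by
  refine ⟨preyDigraph C p, not_transGen_preyDigraph_self f hf, fun a b => ?_⟩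
  simp only [preyDigraph_compete_iff hp, hG]

end CliqueCover

theorem hamming_two_adj_iff {q : ℕ} {u v : Fin 2 → Fin q} :
    (hamming 2 q).Adj u v ↔ u ≠ v ∧ ∃ k, u k = v k := by
  have huniv : (Finset.univ : Finset (Fin 2)) = {0, 1} := by decide
  change hammingDist u v = 1 ↔ _
  rw [hammingDist, huniv, Fin.exists_fin_two, Ne, funext_iff, Fin.forall_fin_two]
  by_cases h0 : u 0 = v 0 <;> by_cases h1 : u 1 = v 1 <;>
    simp [Finset.filter_insert, Finset.filter_singleton, h0, h1]

section HammingTwo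

variable {n : ℕ}

def rowPrey : Fin (n + 1) → (Fin 2 → Fin (n + 1)) ⊕ Fin 2 :=
  Fin.lastCases (.inr 0) fun j => .inl ![j.succ, 0]

def colPrey : Fin (n + 1) → (Fin 2 → Fin (n + 1)) ⊕ Fin 2 :=
  Fin.lastCases (.inr 1) fun j => .inl ![Fin.last n, j.succ]

theorem rowPrey_injective : Injective (rowPrey (n := n)) := by
  intro i j h
  induction i using Fin.lastCases <;> induction j using Fin.lastCases <;>
    simp_all [rowPrey, Fin.succ_inj]

theorem colPrey_injective : Injective (colPrey (n := n)) := by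
  intro i j h
  induction i using Fin.lastCases <;> induction j using Fin.lastCases <;>
    simp_all [colPrey, Fin.succ_inj]

theorem rowPrey_ne_colPrey (i j : Fin (n + 1)) : rowPrey i ≠ colPrey j := by
  induction i using Fin.lastCases <;> induction j using Fin.lastCases <;>
    simp [rowPrey, colPrey, funext_iff, Fin.forall_fin_two, eq_comm (a := (0 : Fin _))]

def lexRank : (Fin 2 → Fin (n + 1)) ⊕ Fin 2 → WithTop (Fin (n + 1) ×ₗ Fin (n + 1))
  | .inl x => WithTop.some (toLex (x 0, x 1))
  | .inr _ => ⊤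

theorem lexRank_lt_rowPrey (x : Fin 2 → Fin (n + 1)) :
    lexRank (.inl x) < lexRank (rowPrey (x 0)) := by
  induction h : x 0 using Fin.lastCases with
  | last => simp [rowPrey, lexRank]
  | cast j => simp [rowPrey, lexRank, h, Prod.Lex.toLex_lt_toLex]

theorem lexRank_lt_colPrey (x : Fin 2 → Fin (n + 1)) :
    lexRank (.inl x) < lexRank (colPrey (x 1)) := by
  induction h : x 1 using Fin.lastCases with
  | last => simp [colPrey, lexRank]
  | cast j =>
    simp [colPrey, lexRank, h, Prod.Lex.toLex_lt_toLex, lt_or_eq_of_le (Fin.le_last (x 0))]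

end HammingTwo

theorem exists_acyclic_competition_hamming_two (n : ℕ) :
    ∃ D : (Fin 2 → Fin (n + 1)) ⊕ Fin 2 → (Fin 2 → Fin (n + 1)) ⊕ Fin 2 → Prop,
      (∀ w, ¬ TransGen D w w) ∧
      ∀ a b, (a ≠ b ∧ ∃ w, D a w ∧ D b w) ↔
        ∃ u v, a = .inl u ∧ b = .inl v ∧ (hamming 2 (n + 1)).Adj u v := by
  refine exists_acyclic_competition_of_cliqueCover (hamming 2 (n + 1))
    (C := Sum.elim (fun j => {x | x 0 = j}) (fun j => {x | x 1 = j}))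
    (fun u v => ?_) (rowPrey_injective.sumElim colPrey_injective rowPrey_ne_colPrey) lexRank ?_
  · simp [hamming_two_adj_iff, Sum.exists, Fin.exists_fin_two, eq_comm]
  · rintro (j | j) x rfl
    exacts [lexRank_lt_rowPrey x, lexRank_lt_colPrey x]

/-- For q ≥ 2 there is an acyclic digraph on [q]² together with two extra vertices
whose competition graph is H(2,q) plus two isolated vertices; hence k(H(2,q)) ≤ 2. -/
theorem compnum_H2q_upper (q : ℕ) (hq : 2 ≤ q) :
    (∃ D : ((Fin 2 → Fin q) ⊕ Fin 2) → ((Fin 2 → Fin q) ⊕ Fin 2) → Prop,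
      (∀ w, ¬ Relation.TransGen D w w) ∧
      (∀ a b, (a ≠ b ∧ ∃ w, D a w ∧ D b w) ↔
        ∃ u v, a = Sum.inl u ∧ b = Sum.inl v ∧ (hamming 2 q).Adj u v)) ∧
    CompetitionNumber (hamming 2 q) ≤ 2 := by
  obtain ⟨n, rfl⟩ : ∃ n, q = n + 1 := ⟨q - 1, by omega⟩
  have hD := exists_acyclic_competition_hamming_two n
  exact ⟨hD, Nat.sInf_le hD⟩
end
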